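/- Let Λ be an n-dimensional lattice of Voronoi's first kind in ℝ^m with obtuse superbasis b_1, …, b_{n+1}, let B be the linear map sending w ∈ ℝ^{n+1} to ∑_{i=1}^{n+1} w_i b_i, let z ∈ ℝ^{n+1} and y = Bz. Let u ∈ ℤ^{n+1} and suppose the lattice point Bu is ℓ-close to y with ℓ > 0. Let g ∈ {0,1}^{n+1} satisfy ‖B(z − u − g)‖² = min over t ∈ {0,1}^{n+1} of ‖B(z − u − t)‖². Then the lattice point B(u + g) is (ℓ−1)-close to y. -/

import Mathlib

open scoped RealInnerProductSpace

/-!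
Put `F c = ‖B(z − u − c)‖²` for `c ∈ ℤ^{n+1}`. Obtuseness makes `F` submodular,
`F (x ⊓ y) + F (x ⊔ y) ≤ F x + F y`, and `∑ bᵢ = 0` makes it invariant under adding a constant
vector. Let `v`, with `k ≤ v ≤ k + ℓ`, witness the `ℓ`-closeness of `Bu`. Submodularity against
`g + k`, with the minimality of `g` on `{0,1}^{n+1}` applied to `(v ⊓ (g + k)) − k`, gives
`F (v ⊔ (g + k)) ≤ F v`; dually, cutting off at `g + k + ℓ − 1` does not increase `F` either.
The resulting `x = g + w`, where `w` is `v − g` clamped to `[k, k + ℓ − 1]`, has `F x ≤ F v`, so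
`B(u + g + w)` is again a closest point, and `rng w = ℓ − 1`.
-/

def rng {n : ℕ} (v : Fin (n + 1) → ℤ) : ℤ :=
  Finset.univ.sup' Finset.univ_nonempty v - Finset.univ.inf' Finset.univ_nonempty v

section Obtuse

variable {ι E : Type*} [Fintype ι] [NormedAddCommGroup E] [InnerProductSpace ℝ E] {b : ι → E}

theorem inner_sum_smul_sum_smul_nonpos (hb : ∀ i j, i ≠ j → ⟪b i, b j⟫ ≤ 0) {s t : ι → ℝ}
    (hs : 0 ≤ s) (ht : 0 ≤ t) (hst : ∀ i, s i * t i = 0) :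
    ⟪∑ i, s i • b i, ∑ i, t i • b i⟫ ≤ 0 := by
  rw [sum_inner]
  simp only [inner_sum, real_inner_smul_left, real_inner_smul_right]
  refine Finset.sum_nonpos fun i _ => Finset.sum_nonpos fun j _ => ?_
  rcases eq_or_ne i j with rfl | hij
  · rw [mul_left_comm, ← mul_assoc, hst, zero_mul]
  · exact mul_nonpos_of_nonneg_of_nonpos (ht j) (mul_nonpos_of_nonneg_of_nonpos (hs i) (hb i j hij))

omit [Fintype ι] in
theorem norm_sq_add_norm_sq_eq_of_add_eq {M m C D : E} (h : M + m = C + D) :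
    ‖M‖ ^ 2 + ‖m‖ ^ 2 = ‖C‖ ^ 2 + ‖D‖ ^ 2 + 2 * ⟪M - C, M - D⟫ := by
  obtain rfl : m = C + D - M := eq_sub_of_add_eq' h
  simp only [← real_inner_self_eq_norm_sq, inner_add_left, inner_add_right, inner_sub_left,
    inner_sub_right, real_inner_comm C, real_inner_comm D M]
  ring

/-- The cross term `⟪M − C, M − D⟫` is `≤ 0` because the coefficient vectors `max c d − c` and
`max c d − d` have disjoint supports. -/
theorem norm_sq_sum_smul_max_add_min_le (hb : ∀ i j, i ≠ j → ⟪b i, b j⟫ ≤ 0) (c d : ι → ℝ) :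
    ‖∑ i, max (c i) (d i) • b i‖ ^ 2 + ‖∑ i, min (c i) (d i) • b i‖ ^ 2 ≤
      ‖∑ i, c i • b i‖ ^ 2 + ‖∑ i, d i • b i‖ ^ 2 := by
  have hsum : ∑ i, max (c i) (d i) • b i + ∑ i, min (c i) (d i) • b i =
      ∑ i, c i • b i + ∑ i, d i • b i := by
    simp only [← Finset.sum_add_distrib, ← add_smul, add_comm (max _ _), min_add_max]
  have hcross : ⟪∑ i, max (c i) (d i) • b i - ∑ i, c i • b i,
      ∑ i, max (c i) (d i) • b i - ∑ i, d i • b i⟫ ≤ 0 := by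
    simp only [← Finset.sum_sub_distrib, ← sub_smul]
    refine inner_sum_smul_sum_smul_nonpos hb (fun i => sub_nonneg.2 (le_max_left _ _))
      (fun i => sub_nonneg.2 (le_max_right _ _)) fun i => ?_
    rcases max_choice (c i) (d i) with h | h <;> simp [h]
  rw [norm_sq_add_norm_sq_eq_of_add_eq hsum]
  linarith

theorem norm_sq_sum_sub_inf_add_sup_le (hb : ∀ i j, i ≠ j → ⟪b i, b j⟫ ≤ 0) (z : ι → ℝ)
    (x y : ι → ℤ) :
    ‖∑ i, (z i - ((x ⊓ y) i : ℝ)) • b i‖ ^ 2 + ‖∑ i, (z i - ((x ⊔ y) i : ℝ)) • b i‖ ^ 2 ≤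
      ‖∑ i, (z i - x i) • b i‖ ^ 2 + ‖∑ i, (z i - y i) • b i‖ ^ 2 := by
  have h := norm_sq_sum_smul_max_add_min_le hb (fun i => z i - x i) (fun i => z i - y i)
  simp only [max_sub_sub_left, min_sub_sub_left] at h
  simp only [Pi.inf_apply, Pi.sup_apply, Int.cast_min, Int.cast_max]
  linarith

theorem sum_sub_intCast_add_smul_of_sum_eq_zero (hb : ∑ i, b i = 0) (z : ι → ℝ) (x : ι → ℤ)
    (k : ℤ) : ∑ i, (z i - ((x i + k : ℤ) : ℝ)) • b i = ∑ i, (z i - x i) • b i := by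
  simp [← sub_sub, sub_smul, Finset.sum_sub_distrib, ← Finset.smul_sum, hb]

end Obtuse

section Submodular

variable {ι : Type*} {F : (ι → ℤ) → ℝ} {g : ι → ℤ}

theorem apply_sup_add_const_le (hsub : ∀ x y, F (x ⊓ y) + F (x ⊔ y) ≤ F x + F y)
    (hshift : ∀ x k, F (fun i => x i + k) = F x) (hg : ∀ i, g i = 0 ∨ g i = 1)
    (hgmin : ∀ t : ι → ℤ, (∀ i, t i = 0 ∨ t i = 1) → F g ≤ F t)
    {x : ι → ℤ} {k : ℤ} (hx : ∀ i, k ≤ x i) :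
    F (x ⊔ fun i => g i + k) ≤ F x := by
  set a := x ⊓ fun i => g i + k
  have ha : F a = F (fun i => a i - k) := by simpa using hshift (fun i => a i - k) k
  have hg_le : F g ≤ F (fun i => a i - k) := hgmin _ fun i => by
    have := hx i
    simp only [a, Pi.inf_apply]
    rcases hg i with h | h <;> omega
  linarith [hsub x (fun i => g i + k), hshift g k]

theorem apply_inf_add_const_le (hsub : ∀ x y, F (x ⊓ y) + F (x ⊔ y) ≤ F x + F y)
    (hshift : ∀ x k, F (fun i => x i + k) = F x) (hg : ∀ i, g i = 0 ∨ g i = 1)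
    (hgmin : ∀ t : ι → ℤ, (∀ i, t i = 0 ∨ t i = 1) → F g ≤ F t)
    {x : ι → ℤ} {k : ℤ} (hx : ∀ i, x i ≤ k + 1) :
    F (x ⊓ fun i => g i + k) ≤ F x := by
  set a := x ⊔ fun i => g i + k
  have ha : F a = F (fun i => a i - k) := by simpa using hshift (fun i => a i - k) k
  have hg_le : F g ≤ F (fun i => a i - k) := hgmin _ fun i => by
    have := hx i
    simp only [a, Pi.sup_apply]
    rcases hg i with h | h <;> omega
  linarith [hsub x (fun i => g i + k), hshift g k]

end Submodular

section Range

variable {n : ℕ}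

theorem rng_eq_sub_of_bounds {w : Fin (n + 1) → ℤ} {lo hi : ℤ} (hw : ∀ i, w i ∈ Set.Icc lo hi)
    {i₀ i₁ : Fin (n + 1)} (h₀ : w i₀ = lo) (h₁ : w i₁ = hi) : rng w = hi - lo := by
  rw [rng, le_antisymm (Finset.sup'_le _ _ fun i _ => (hw i).2)
      (h₁ ▸ Finset.le_sup' w (Finset.mem_univ i₁)),
    le_antisymm (h₀ ▸ Finset.inf'_le w (Finset.mem_univ i₀))
      (Finset.le_inf' _ _ fun i _ => (hw i).1)]

theorem exists_bounds_rng (v : Fin (n + 1) → ℤ) :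
    ∃ k i₀ i₁, (∀ i, v i ∈ Set.Icc k (k + rng v)) ∧ v i₀ = k ∧ v i₁ = k + rng v := by
  obtain ⟨i₀, -, h₀⟩ := Finset.exists_mem_eq_inf' Finset.univ_nonempty v
  obtain ⟨i₁, -, h₁⟩ := Finset.exists_mem_eq_sup' Finset.univ_nonempty v
  refine ⟨v i₀, i₀, i₁, fun i => ⟨?_, ?_⟩, rfl, ?_⟩
  · exact h₀ ▸ Finset.inf'_le v (Finset.mem_univ i)
  · rw [rng, ← h₀]
    linarith [Finset.le_sup' v (Finset.mem_univ i)]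
  · rw [rng, ← h₀, h₁]
    ring

theorem rng_clamp_sub {v g : Fin (n + 1) → ℤ} (hg : ∀ i, g i = 0 ∨ g i = 1) {k r : ℤ}
    (hr : 1 ≤ r) (hv : ∀ i, v i ∈ Set.Icc k (k + r)) {i₀ i₁ : Fin (n + 1)} (h₀ : v i₀ = k)
    (h₁ : v i₁ = k + r) :
    rng (((v ⊔ fun i => g i + k) ⊓ fun i => g i + (k + (r - 1))) - g) = r - 1 := by
  rw [rng_eq_sub_of_bounds (lo := k) (hi := k + (r - 1)) (i₀ := i₀) (i₁ := i₁)]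
  · ring
  · intro i
    obtain ⟨hlo, hhi⟩ := hv i
    simp only [Set.mem_Icc, Pi.sub_apply, Pi.sup_apply, Pi.inf_apply]
    rcases hg i with h | h <;> omega
  · simp only [Pi.sub_apply, Pi.sup_apply, Pi.inf_apply]
    rcases hg i₀ with h | h <;> omega
  · simp only [Pi.sub_apply, Pi.sup_apply, Pi.inf_apply]
    rcases hg i₁ with h | h <;> omega

end Range

theorem exists_sum_smul_castSucc_eq {E : Type*} [AddCommGroup E] [Module ℝ E] {n : ℕ}
    {b : Fin (n + 1) → E} (hb : ∑ i, b i = 0) (c : Fin (n + 1) → ℤ) :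
    ∃ a : Fin n → ℤ, ∑ i, (c i : ℝ) • b i = ∑ i, (a i : ℝ) • b i.castSucc := by
  refine ⟨fun i => c i.castSucc - c (Fin.last n), ?_⟩
  rw [Fin.sum_univ_castSucc] at hb ⊢
  rw [eq_neg_of_add_eq_zero_right hb]
  push_cast
  simp only [sub_smul, Finset.sum_sub_distrib, smul_neg, ← Finset.smul_sum]
  abel

theorem minimizing_step_decreases_closeness_general
    (n m : ℕ) (b : Fin (n + 1) → EuclideanSpace ℝ (Fin m))
    (Λ : Set (EuclideanSpace ℝ (Fin m)))
    (hΛ : Λ = {x | ∃ u : Fin n → ℤ, x = ∑ i, (u i : ℝ) • b i.castSucc})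
    (hsum : ∑ i, b i = 0)
    (hobtuse : ∀ i j, i ≠ j → ⟪b i, b j⟫ ≤ 0)
    (z : Fin (n + 1) → ℝ) (u : Fin (n + 1) → ℤ)
    (ℓ : ℕ) (hℓ : 0 < ℓ)
    (hclose : ∃ v : Fin (n + 1) → ℤ, rng v = (ℓ : ℤ) ∧
      ((∑ i, ((u i : ℝ) + (v i : ℝ)) • b i) ∈ Λ ∧
        ∀ x' ∈ Λ, ‖(∑ i, z i • b i) - ∑ i, ((u i : ℝ) + (v i : ℝ)) • b i‖ ≤
          ‖(∑ i, z i • b i) - x'‖))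
    (g : Fin (n + 1) → ℤ) (hg : ∀ i, g i = 0 ∨ g i = 1)
    (hmin : ∀ t : Fin (n + 1) → ℤ, (∀ i, t i = 0 ∨ t i = 1) →
      ‖∑ i, (z i - (u i : ℝ) - (g i : ℝ)) • b i‖ ^ 2 ≤
        ‖∑ i, (z i - (u i : ℝ) - (t i : ℝ)) • b i‖ ^ 2) :
    ∃ w : Fin (n + 1) → ℤ, rng w = (ℓ : ℤ) - 1 ∧
      ((∑ i, ((u i : ℝ) + (g i : ℝ) + (w i : ℝ)) • b i) ∈ Λ ∧
        ∀ x' ∈ Λ, ‖(∑ i, z i • b i) - ∑ i, ((u i : ℝ) + (g i : ℝ) + (w i : ℝ)) • b i‖ ≤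
          ‖(∑ i, z i • b i) - x'‖) := by
  obtain ⟨v, hv_rng, -, hv_closest⟩ := hclose
  set F : (Fin (n + 1) → ℤ) → ℝ := fun c => ‖∑ i, (z i - u i - c i) • b i‖ ^ 2
  have hsub (x y : Fin (n + 1) → ℤ) : F (x ⊓ y) + F (x ⊔ y) ≤ F x + F y :=
    norm_sq_sum_sub_inf_add_sup_le hobtuse (fun i => z i - u i) x y
  have hshift (x : Fin (n + 1) → ℤ) (k : ℤ) : F (fun i => x i + k) = F x := by
    simp only [F, sum_sub_intCast_add_smul_of_sum_eq_zero hsum (fun i => z i - u i) x k]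
  have hdist (c : Fin (n + 1) → ℤ) :
      ‖∑ i, z i • b i - ∑ i, ((u i : ℝ) + c i) • b i‖ = ‖∑ i, (z i - u i - c i) • b i‖ := by
    simp only [← Finset.sum_sub_distrib, ← sub_smul, sub_sub]
  obtain ⟨k, i₀, i₁, hv_bds, hv₀, hv₁⟩ := exists_bounds_rng v
  rw [hv_rng] at hv_bds hv₁
  set x := (v ⊔ fun i => g i + k) ⊓ fun i => g i + (k + (ℓ - 1))
  have hx : F x ≤ F v := by
    refine (apply_inf_add_const_le hsub hshift hg hmin fun i => ?_).trans
      (apply_sup_add_const_le hsub hshift hg hmin fun i => (hv_bds i).1)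
    have := (hv_bds i).2
    simp only [Pi.sup_apply]
    rcases hg i with h | h <;> omega
  have hcoef (i : Fin (n + 1)) : (u i : ℝ) + g i + ((x - g) i : ℝ) = u i + x i := by
    simp only [Pi.sub_apply, Int.cast_sub]
    ring
  refine ⟨x - g, rng_clamp_sub hg (by exact_mod_cast hℓ) hv_bds hv₀ hv₁, ?_, fun x' hx' => ?_⟩
  · simpa only [hcoef, hΛ, Set.mem_ofPred_eq, eq_comm, Pi.add_apply, Int.cast_add] using
      exists_sum_smul_castSucc_eq hsum (u + x)
  · rw [hdist] at hv_closest
    simp only [hcoef, hdist]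
    exact (le_of_pow_le_pow_left₀ two_ne_zero (norm_nonneg _) hx).trans (hv_closest x' hx')

/-- for a lattice of Voronoi's first kind with obtuse superbasis, if `Bu`
is `ℓ`-close to `y = Bz` with `ℓ > 0` and `g ∈ {0,1}^{n+1}` minimizes
`‖B(z − u − t)‖²` over `t ∈ {0,1}^{n+1}`, then `B(u + g)` is `(ℓ−1)`-close to `y`.
(A lattice point `x` is `ℓ`-close to `y` if there is `v ∈ ℤ^{n+1}` with `rng(v) = ℓ`
such that `x + Bv` is a closest lattice point to `y`.) -/
theorem minimizing_step_decreases_closeness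
    (n m : ℕ) (b : Fin (n + 1) → EuclideanSpace ℝ (Fin m))
    (hb : LinearIndependent ℝ (fun i : Fin n => b i.castSucc))
    (Λ : Set (EuclideanSpace ℝ (Fin m)))
    (hΛ : Λ = {x | ∃ u : Fin n → ℤ, x = ∑ i, (u i : ℝ) • b i.castSucc})
    (hsum : ∑ i, b i = 0)
    (hobtuse : ∀ i j, i ≠ j → ⟪b i, b j⟫ ≤ 0)
    (z : Fin (n + 1) → ℝ) (u : Fin (n + 1) → ℤ)
    (ℓ : ℕ) (hℓ : 0 < ℓ)
    (hclose : ∃ v : Fin (n + 1) → ℤ, rng v = (ℓ : ℤ) ∧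
      ((∑ i, ((u i : ℝ) + (v i : ℝ)) • b i) ∈ Λ ∧
        ∀ x' ∈ Λ, ‖(∑ i, z i • b i) - ∑ i, ((u i : ℝ) + (v i : ℝ)) • b i‖ ≤
          ‖(∑ i, z i • b i) - x'‖))
    (g : Fin (n + 1) → ℤ) (hg : ∀ i, g i = 0 ∨ g i = 1)
    (hmin : ∀ t : Fin (n + 1) → ℤ, (∀ i, t i = 0 ∨ t i = 1) →
      ‖∑ i, (z i - (u i : ℝ) - (g i : ℝ)) • b i‖ ^ 2 ≤
        ‖∑ i, (z i - (u i : ℝ) - (t i : ℝ)) • b i‖ ^ 2) :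
    ∃ w : Fin (n + 1) → ℤ, rng w = (ℓ : ℤ) - 1 ∧
      ((∑ i, ((u i : ℝ) + (g i : ℝ) + (w i : ℝ)) • b i) ∈ Λ ∧
        ∀ x' ∈ Λ, ‖(∑ i, z i • b i) - ∑ i, ((u i : ℝ) + (g i : ℝ) + (w i : ℝ)) • b i‖ ≤
          ‖(∑ i, z i • b i) - x'‖) :=
  minimizing_step_decreases_closeness_general n m b Λ hΛ hsum hobtuse z u ℓ hℓ hclose g hg hmin
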